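/- In the general setting, assume Σ_{j>⌊m/4⌋} α_j·Λ_{4j}/j < ∞. Then for every f ∈ F, the series Σ_{k>m} ⟨f, b_k⟩_{L₂(μ)}·b_k converges uniformly up to a μ-null set, f agrees μ-almost everywhere with P_{V_m} f plus this series, and ‖f − P_{V_m} f‖_{L_∞(μ)} ≤ 2·Σ_{j>⌊m/4⌋} α_j·Λ_{4j}/j. -/

import Mathlib

/-!
Write `S_n = ∑_{k ≤ n} ⟨f, b_k⟩ b_k`. As the best `L²`-approximation of `f` from `V_n`, `S_n`
satisfies `‖f - S_n‖₂ ≤ α_n`, and each block `S_c - S_a` with `a ≤ c ≤ n` lies in `V_n` and has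
`L²`-norm at most `‖f - S_a‖₂ ≤ α_a`, hence sup-norm at most `Λ_n α_a`. Along the dyadic indices
`n_s = 2ˢ m` the tail series therefore oscillates by at most `w_s = Λ_{2 n_s} α_{n_s}` on
`[n_s, n_{s+1}]`, off a single null set, and condensation gives
`∑ w_s ≤ 2 ∑_{j > ⌊m/4⌋} α_j Λ_{4j} / j`. So the tails converge uniformly to some `g` with
`|g| ≤ ∑ w_s`. Since `Λ_n ≥ ‖b_1‖_∞ > 0`, the same finiteness forces `α_n → 0`, so `S_n → f` in
`L²`; comparing the two limits in measure gives `g = f - S_m` almost everywhere.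
-/

open MeasureTheory ENNReal

/-- The (inverse) Christoffel function `Λ(V) = sup_{f ∈ V, f ≠ 0} ‖f‖_∞ / ‖f‖_2`. -/
noncomputable def christoffel {D : Type*} [MeasurableSpace D] (μ : Measure D)
    (V : Submodule ℂ (D → ℂ)) : ℝ≥0∞ :=
  ⨆ f ∈ V, eLpNorm f ⊤ μ / eLpNorm f 2 μ

/-- `V_n = span{b_1, …, b_n}`. -/
noncomputable def Vspan {D : Type*} (b : ℕ → D → ℂ) (n : ℕ) : Submodule ℂ (D → ℂ) :=
  Submodule.span ℂ (b '' Set.Icc 1 n)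

/-- `α_n = sup_{f ∈ F} inf_{g ∈ V_n} ‖f - g‖_{L₂(μ)}`. -/
noncomputable def alphaSeq {D : Type*} [MeasurableSpace D] (μ : Measure D)
    (F : Set (D → ℂ)) (b : ℕ → D → ℂ) (n : ℕ) : ℝ≥0∞ :=
  ⨆ f ∈ F, ⨅ g ∈ Vspan b n, eLpNorm (fun x => f x - g x) 2 μ

/-- The `L₂(μ)`-Fourier coefficient `⟨f, b_k⟩ = ∫ conj(b_k) f dμ`, so that the orthogonal
projection of `f` onto `V_m` is `P_m f = ∑_{k=1}^m ⟨f, b_k⟩ b_k`. -/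
noncomputable def fourCoeff {D : Type*} [MeasurableSpace D] (μ : Measure D)
    (b : ℕ → D → ℂ) (f : D → ℂ) (k : ℕ) : ℂ :=
  ∫ x, (starRingEnd ℂ) (b k x) * f x ∂μ

section Orthonormal

variable {ι E : Type*} [NormedAddCommGroup E] [InnerProductSpace ℂ E]
  {v : ι → E} {s t : Finset ι}

theorem inner_sub_sum_inner_smul_eq_zero [DecidableEq ι]
    (hv : ∀ i ∈ s, ∀ j ∈ s, inner ℂ (v i) (v j) = if i = j then 1 else 0) (x : E) {i : ι}
    (hi : i ∈ s) : inner ℂ (v i) (x - ∑ j ∈ s, inner ℂ (v j) x • v j) = 0 := by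
  rw [inner_sub_right, inner_sum, Finset.sum_eq_single i]
  · rw [inner_smul_right, hv i hi i hi, if_pos rfl, mul_one, sub_self]
  · intro j hj hji
    simp [inner_smul_right, hv i hi j hj, Ne.symm hji]
  · exact fun h => absurd hi h

theorem norm_sq_sub_sum_inner_smul_add [DecidableEq ι]
    (hv : ∀ i ∈ s, ∀ j ∈ s, inner ℂ (v i) (v j) = if i = j then 1 else 0) (x : E) {y : E}
    (hy : y ∈ Submodule.span ℂ (v '' s)) :
    ‖x - ∑ j ∈ s, inner ℂ (v j) x • v j + y‖ ^ 2 =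
      ‖x - ∑ j ∈ s, inner ℂ (v j) x • v j‖ ^ 2 + ‖y‖ ^ 2 := by
  have hortho : Submodule.span ℂ (v '' s) ⟂
      Submodule.span ℂ {x - ∑ j ∈ s, inner ℂ (v j) x • v j} := by
    rw [Submodule.isOrtho_span]
    rintro _ ⟨i, hi, rfl⟩ _ rfl
    exact inner_sub_sum_inner_smul_eq_zero hv x hi
  have h := hortho.inner_eq hy (Submodule.mem_span_singleton_self _)
  rw [← inner_conj_symm, map_eq_zero] at h
  simpa only [sq] using norm_add_sq_eq_norm_sq_add_norm_sq_of_inner_eq_zero _ _ h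

theorem sum_inner_smul_mem_span (x : E) (hts : t ⊆ s) :
    ∑ j ∈ t, inner ℂ (v j) x • v j ∈ Submodule.span ℂ (v '' s) :=
  Submodule.sum_mem _ fun _ hj =>
    Submodule.smul_mem _ _ (Submodule.subset_span (Set.mem_image_of_mem v (hts hj)))

theorem norm_sub_sum_inner_smul_le [DecidableEq ι]
    (hv : ∀ i ∈ s, ∀ j ∈ s, inner ℂ (v i) (v j) = if i = j then 1 else 0) (x : E) {y : E}
    (hy : y ∈ Submodule.span ℂ (v '' s)) :
    ‖x - ∑ j ∈ s, inner ℂ (v j) x • v j‖ ≤ ‖x - y‖ := by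
  have h := norm_sq_sub_sum_inner_smul_add hv x
    (sub_mem (sum_inner_smul_mem_span x subset_rfl) hy)
  rw [sub_add_sub_cancel] at h
  exact le_of_sq_le_sq (by rw [h]; exact le_add_of_nonneg_right (sq_nonneg _)) (norm_nonneg _)

theorem norm_sum_inner_smul_sub_le [DecidableEq ι]
    (hv : ∀ i ∈ s, ∀ j ∈ s, inner ℂ (v i) (v j) = if i = j then 1 else 0) (x : E)
    (hts : t ⊆ s) :
    ‖∑ j ∈ s, inner ℂ (v j) x • v j - ∑ j ∈ t, inner ℂ (v j) x • v j‖ ≤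
      ‖x - ∑ j ∈ t, inner ℂ (v j) x • v j‖ := by
  have h := norm_sq_sub_sum_inner_smul_add hv x
    (sub_mem (sum_inner_smul_mem_span x subset_rfl) (sum_inner_smul_mem_span x hts))
  rw [sub_add_sub_cancel] at h
  exact le_of_sq_le_sq (by rw [h]; exact le_add_of_nonneg_left (sq_nonneg _)) (norm_nonneg _)

end Orthonormal

section Condensation

open Function

theorem ENNReal.tsum_sum_le_tsum_of_pairwise_disjoint {ι κ : Type*} [DecidableEq κ]
    {I : ι → Finset κ} (hI : Pairwise (Disjoint on I)) (a : κ → ℝ≥0∞) :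
    ∑' i, ∑ j ∈ I i, a j ≤ ∑' j, a j := by
  rw [ENNReal.tsum_eq_iSup_sum]
  refine iSup_le fun T => ?_
  rw [← Finset.sum_biUnion (hI.set_pairwise _)]
  exact ENNReal.sum_le_tsum _

theorem pairwise_disjoint_Ioc_half_two_pow_mul (m : ℕ) :
    Pairwise (Disjoint on fun s : ℕ => Finset.Ioc (2 ^ s * m / 2) (2 ^ s * m)) := by
  refine (pairwise_disjoint_on _).2 fun s t hst => Finset.Ioc_disjoint_Ioc_of_le ?_
  rw [Nat.le_div_iff_mul_le two_pos]
  calc 2 ^ s * m * 2 = 2 ^ (s + 1) * m := by ring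
    _ ≤ 2 ^ t * m := by gcongr <;> omega

theorem le_two_mul_sum_Ioc_half {a : ℕ → ℝ≥0∞} {x : ℝ≥0∞} {n : ℕ} (hn : n ≠ 0)
    (h : ∀ j ∈ Finset.Ioc (n / 2) n, x / n ≤ a j) :
    x ≤ 2 * ∑ j ∈ Finset.Ioc (n / 2) n, a j := by
  have hcard : (n : ℝ≥0∞) ≤ 2 * (Finset.Ioc (n / 2) n).card := by
    rw [Nat.card_Ioc]
    exact_mod_cast (by omega : n ≤ 2 * (n - n / 2))
  calc x = n * (x / n) := (ENNReal.mul_div_cancel (Nat.cast_ne_zero.2 hn) (natCast_ne_top n)).symm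
    _ ≤ 2 * (Finset.Ioc (n / 2) n).card * (x / n) := by gcongr
    _ = 2 * ∑ _j ∈ Finset.Ioc (n / 2) n, x / n := by
        rw [Finset.sum_const, nsmul_eq_mul, mul_assoc]
    _ ≤ 2 * ∑ j ∈ Finset.Ioc (n / 2) n, a j := by grw [Finset.sum_le_sum h]

/-- Dyadic condensation: the block `(2ˢm/2, 2ˢm]` of the series on the right dominates the
`s`-th term on the left. -/
theorem tsum_dyadic_le_two_mul_tsum {α Λ : ℕ → ℝ≥0∞} (hα : Antitone α) (hΛ : Monotone Λ)
    {m : ℕ} (hm : m ≠ 0) :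
    ∑' s, Λ (2 ^ (s + 1) * m) * α (2 ^ s * m) ≤
      2 * ∑' j : ℕ, if m / 4 < j then α j * Λ (4 * j) / j else 0 := by
  set a : ℕ → ℝ≥0∞ := fun j => if m / 4 < j then α j * Λ (4 * j) / j else 0
  have hblock : ∀ s, Λ (2 ^ (s + 1) * m) * α (2 ^ s * m) ≤
      2 * ∑ j ∈ Finset.Ioc (2 ^ s * m / 2) (2 ^ s * m), a j := by
    intro s
    refine le_two_mul_sum_Ioc_half (by positivity) fun j hj => ?_
    rw [Finset.mem_Ioc] at hj
    have hmn : m ≤ 2 ^ s * m := Nat.le_mul_of_pos_left m (by positivity)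
    have h2n : 2 ^ (s + 1) * m = 2 * (2 ^ s * m) := by ring
    rw [show a j = α j * Λ (4 * j) / j from if_pos (by omega), mul_comm]
    exact ENNReal.div_le_div (mul_le_mul' (hα hj.2) (hΛ (by omega))) (Nat.cast_le.2 hj.2)
  calc ∑' s, Λ (2 ^ (s + 1) * m) * α (2 ^ s * m)
      ≤ ∑' s, 2 * ∑ j ∈ Finset.Ioc (2 ^ s * m / 2) (2 ^ s * m), a j :=
        ENNReal.tsum_le_tsum hblock
    _ ≤ 2 * ∑' j, a j := by
        rw [ENNReal.tsum_mul_left]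
        grw [ENNReal.tsum_sum_le_tsum_of_pairwise_disjoint
          (pairwise_disjoint_Ioc_half_two_pow_mul m) a]

theorem ENNReal.tendsto_atTop_zero_of_antitone_of_mul_le {α w : ℕ → ℝ≥0∞} {n : ℕ → ℕ}
    {δ : ℝ≥0∞} (hα : Antitone α) (hδ : δ ≠ 0) (hw : ∑' s, w s ≠ ⊤)
    (h : ∀ s, α (n s) * δ ≤ w s) : Filter.Tendsto α Filter.atTop (nhds 0) := by
  have hw0 : Filter.Tendsto (fun s => w s / δ) Filter.atTop (nhds 0) := by
    simpa using
      ENNReal.Tendsto.div_const (ENNReal.tendsto_atTop_zero_of_tsum_ne_top hw) (Or.inr hδ)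
  have hsub : Filter.Tendsto (fun s => α (n s)) Filter.atTop (nhds 0) :=
    tendsto_of_tendsto_of_tendsto_of_le_of_le tendsto_const_nhds hw0 (fun _ => zero_le)
      fun s => (ENNReal.le_div_iff_mul_le (Or.inl hδ)
        (Or.inr (ENNReal.ne_top_of_tsum_ne_top hw s))).2 (h s)
  have hinf : ⨅ k, α k = 0 := le_antisymm (ge_of_tendsto' hsub fun s => iInf_le _ _) zero_le
  simpa [hinf] using tendsto_atTop_iInf hα

end Condensation

section UniformLimit

open Filter Topology

variable {E : Type*} [PseudoEMetricSpace E]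

theorem edist_le_tsum_of_edist_le_on_blocks {y : ℕ → E} {n : ℕ → ℕ} (hmono : Monotone n)
    (hn : Tendsto n atTop atTop) {w : ℕ → ℝ≥0∞}
    (h : ∀ s k, n s ≤ k → k ≤ n (s + 1) → edist (y k) (y (n s)) ≤ w s) {s k : ℕ}
    (hk : n s ≤ k) : edist (y k) (y (n s)) ≤ ∑' t, w (t + s) := by
  have key : ∀ t s k, n s ≤ k → k ≤ n (t + s) → edist (y k) (y (n s)) ≤ ∑' i, w (i + s) := by
    intro t
    induction t with
    | zero =>
      intro s k h1 h2
      rw [le_antisymm (zero_add s ▸ h2) h1, edist_self]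
      exact zero_le
    | succ t ih =>
      intro s k h1 h2
      rw [tsum_eq_zero_add' ENNReal.summable, zero_add]
      rcases le_or_gt k (n (s + 1)) with hk | hk
      · exact (h s k h1 hk).trans le_self_add
      · calc edist (y k) (y (n s))
            ≤ edist (y (n (s + 1))) (y (n s)) + edist (y k) (y (n (s + 1))) := by
              rw [add_comm]; exact edist_triangle _ _ _
          _ ≤ w s + ∑' i, w (i + (s + 1)) :=
              add_le_add (h s _ (hmono s.le_succ) le_rfl)
                (ih (s + 1) k hk.le (by rwa [← add_assoc, add_right_comm]))
          _ = w s + ∑' i, w (i + 1 + s) := by simp only [add_assoc, add_comm 1 s]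
  obtain ⟨t, ht⟩ := ((hn.comp (tendsto_add_atTop_nat s)).eventually_ge_atTop k).exists
  exact key t s k hk ht

theorem exists_tendstoUniformlyOn_of_edist_le_on_blocks [CompleteSpace E] [Nonempty E] {X : Type*}
    {u : ℕ → X → E} {S : Set X} {n : ℕ → ℕ} (hmono : Monotone n) (hn : Tendsto n atTop atTop)
    {w : ℕ → ℝ≥0∞} (hw : ∑' s, w s ≠ ⊤)
    (h : ∀ s k, n s ≤ k → k ≤ n (s + 1) → ∀ x ∈ S, edist (u k x) (u (n s) x) ≤ w s) :
    ∃ g : X → E, TendstoUniformlyOn u g atTop S ∧ ∀ x ∈ S, edist (g x) (u (n 0) x) ≤ ∑' s, w s := by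
  have htail : ∀ x ∈ S, ∀ s k, n s ≤ k → edist (u k x) (u (n s) x) ≤ ∑' t, w (t + s) :=
    fun x hx s k hk => edist_le_tsum_of_edist_le_on_blocks hmono hn
      (fun s k h1 h2 => h s k h1 h2 x hx) hk
  have hcauchy : UniformCauchySeqOn u atTop S := by
    intro U hU
    obtain ⟨ε, hε, hεU⟩ := mem_uniformity_edist.1 hU
    obtain ⟨s, hs⟩ := ((ENNReal.tendsto_sum_nat_add w hw).eventually
      (gt_mem_nhds (ENNReal.half_pos hε.ne'))).exists
    filter_upwards [prod_mem_prod (eventually_ge_atTop (n s)) (eventually_ge_atTop (n s))]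
      with p hp x hx
    refine hεU ((edist_triangle_right _ _ (u (n s) x)).trans_lt ?_)
    calc edist (u p.1 x) (u (n s) x) + edist (u p.2 x) (u (n s) x)
        ≤ ∑' t, w (t + s) + ∑' t, w (t + s) :=
          add_le_add (htail x hx s _ hp.1) (htail x hx s _ hp.2)
      _ < ε / 2 + ε / 2 := ENNReal.add_lt_add hs hs
      _ = ε := ENNReal.add_halves ε
  have hlim : ∀ x ∈ S, Tendsto (fun k => u k x) atTop (𝓝 (limUnder atTop fun k => u k x)) :=
    fun x hx => (hcauchy.cauchySeq hx).tendsto_limUnder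
  refine ⟨fun x => limUnder atTop fun k => u k x,
    hcauchy.tendstoUniformlyOn_of_tendsto hlim, fun x hx => ?_⟩
  refine le_of_tendsto ((hlim x hx).edist tendsto_const_nhds) ?_
  filter_upwards [eventually_ge_atTop (n 0)] with k hk
  simpa using htail x hx 0 k hk

end UniformLimit

theorem TendstoUniformlyOn.tendstoInMeasure {α ι E : Type*} [MeasurableSpace α]
    {μ : Measure α} [PseudoEMetricSpace E] {F : ι → α → E} {g : α → E} {l : Filter ι}
    {S : Set α} (h : TendstoUniformlyOn F g l S) (hS : ∀ᵐ x ∂μ, x ∈ S) :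
    TendstoInMeasure μ F l g := by
  intro ε hε
  refine tendsto_const_nhds.congr' ?_
  filter_upwards [EMetric.tendstoUniformlyOn_iff.1 h ε hε] with i hi
  refine (measure_mono_null (fun x hx hxS => ?_) (ae_iff.1 hS)).symm
  exact (hi x hxS).not_ge (edist_comm (F i x) (g x) ▸ hx)

section L2

variable {D : Type*} [MeasurableSpace D] {μ : Measure D}

theorem eLpNorm_eq_enorm_of_ae_eq {E : Type*} [NormedAddCommGroup E] {p : ℝ≥0∞}
    {u : D → E} {y : Lp E p μ} (h : ⇑y =ᵐ[μ] u) : eLpNorm u p μ = ‖y‖ₑ := by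
  rw [Lp.enorm_def, eLpNorm_congr_ae h]

theorem exists_mem_span_coeFn_ae_eq {E ι : Type*} [NormedAddCommGroup E] [NormedSpace ℂ E]
    {p : ℝ≥0∞} [Fact (1 ≤ p)] {v : ι → D → E} {V : ι → Lp E p μ} {s : Set ι}
    (hV : ∀ i ∈ s, ⇑(V i) =ᵐ[μ] v i) {g : D → E} (hg : g ∈ Submodule.span ℂ (v '' s)) :
    ∃ y ∈ Submodule.span ℂ (V '' s), ⇑y =ᵐ[μ] g := by
  induction hg using Submodule.span_induction with
  | mem _ hw =>
    obtain ⟨i, hi, rfl⟩ := hw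
    exact ⟨V i, Submodule.subset_span ⟨i, hi, rfl⟩, hV i hi⟩
  | zero => exact ⟨0, zero_mem _, Lp.coeFn_zero _ _ _⟩
  | add _ _ _ _ hg hh =>
    obtain ⟨y, hy, hyg⟩ := hg
    obtain ⟨z, hz, hzh⟩ := hh
    exact ⟨y + z, add_mem hy hz, (Lp.coeFn_add y z).trans (hyg.add hzh)⟩
  | smul a _ _ hg =>
    obtain ⟨y, hy, hyg⟩ := hg
    exact ⟨a • y, Submodule.smul_mem _ a hy, (Lp.coeFn_smul a y).trans (hyg.const_smul a)⟩

theorem memLp_two_of_integral_conj_mul_self_ne_zero {g : D → ℂ}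
    (hg : AEStronglyMeasurable g μ) (h : ∫ x, (starRingEnd ℂ) (g x) * g x ∂μ ≠ 0) :
    MemLp g 2 μ :=
  (memLp_two_iff_integrable_sq_norm hg).2 <|
    (Integrable.of_integral_ne_zero h).norm.congr (.of_forall fun x => by simp [sq])

open Classical in
/-- The junk value is `0` when `g ∉ L²`. -/
noncomputable def toL2 (μ : Measure D) (g : D → ℂ) : Lp ℂ 2 μ :=
  if h : MemLp g 2 μ then h.toLp g else 0

theorem coeFn_toL2 {g : D → ℂ} (h : MemLp g 2 μ) : ⇑(toL2 μ g) =ᵐ[μ] g := by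
  rw [toL2, dif_pos h]
  exact h.coeFn_toLp

theorem inner_toL2 {g h : D → ℂ} (hg : MemLp g 2 μ) (hh : MemLp h 2 μ) :
    inner ℂ (toL2 μ g) (toL2 μ h) = ∫ x, (starRingEnd ℂ) (g x) * h x ∂μ := by
  rw [L2.inner_def]
  refine integral_congr_ae ?_
  filter_upwards [coeFn_toL2 hg, coeFn_toL2 hh] with x hgx hhx
  rw [hgx, hhx, RCLike.inner_apply']

theorem eLpNorm_two_eq_one {g : D → ℂ} (hg : AEStronglyMeasurable g μ)
    (h : ∫ x, (starRingEnd ℂ) (g x) * g x ∂μ = 1) : eLpNorm g 2 μ = 1 := by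
  have hg2 := memLp_two_of_integral_conj_mul_self_ne_zero hg (h ▸ one_ne_zero)
  have hnorm : ‖toL2 μ g‖ = 1 := by
    refine (pow_eq_one_iff_of_nonneg (norm_nonneg _) two_ne_zero).1 ?_
    rw [@norm_sq_eq_re_inner ℂ, (inner_toL2 hg2 hg2).trans h, RCLike.one_re]
  rw [eLpNorm_eq_enorm_of_ae_eq (coeFn_toL2 hg2), ← ofReal_norm, hnorm, ofReal_one]

variable {b : ℕ → D → ℂ} {f : D → ℂ} {s t : Finset ℕ}

noncomputable def fourierSum (μ : Measure D) (b : ℕ → D → ℂ) (f : D → ℂ) (s : Finset ℕ) :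
    D → ℂ :=
  fun x => ∑ k ∈ s, fourCoeff μ b f k * b k x

theorem fourierSum_Ioc_add_fourierSum_Ioc {a c d : ℕ} (hac : a ≤ c) (hcd : c ≤ d) :
    fourierSum μ b f (Finset.Ioc a c) + fourierSum μ b f (Finset.Ioc c d) =
      fourierSum μ b f (Finset.Ioc a d) :=
  funext fun _ => Finset.sum_Ioc_consecutive _ hac hcd

theorem fourierSum_Ioc_sub_fourierSum_Ioc {a c d : ℕ} (hac : a ≤ c) (hcd : c ≤ d) :
    fourierSum μ b f (Finset.Ioc a d) - fourierSum μ b f (Finset.Ioc a c) =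
      fourierSum μ b f (Finset.Ioc c d) :=
  sub_eq_of_eq_add' (fourierSum_Ioc_add_fourierSum_Ioc hac hcd).symm

theorem fourierSum_eq_sum_smul : fourierSum μ b f s = ∑ k ∈ s, fourCoeff μ b f k • b k := by
  ext x
  simp [fourierSum, Finset.sum_apply]

theorem fourierSum_mem_span : fourierSum μ b f s ∈ Submodule.span ℂ (b '' s) :=
  fourierSum_eq_sum_smul (μ := μ) ▸ Submodule.sum_mem _ fun _ hk =>
    Submodule.smul_mem _ _ (Submodule.subset_span (Set.mem_image_of_mem b hk))

theorem memLp_fourierSum (hb : ∀ k ∈ s, MemLp (b k) 2 μ) : MemLp (fourierSum μ b f s) 2 μ :=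
  memLp_finsetSum s fun k hk => (hb k hk).const_mul _

theorem coeFn_sum_inner_toL2 (hb : ∀ k ∈ s, MemLp (b k) 2 μ) (hf : MemLp f 2 μ) :
    ⇑(∑ k ∈ s, inner ℂ (toL2 μ (b k)) (toL2 μ f) • toL2 μ (b k)) =ᵐ[μ] fourierSum μ b f s := by
  refine (Lp.coeFn_fun_finsetSum _ _).trans ?_
  have hterm : ∀ k ∈ s, ⇑(inner ℂ (toL2 μ (b k)) (toL2 μ f) • toL2 μ (b k)) =ᵐ[μ]
      fun x => fourCoeff μ b f k * b k x := fun k hk =>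
    (Lp.coeFn_smul _ _).trans <| by
      rw [inner_toL2 (hb k hk) hf]
      exact (coeFn_toL2 (hb k hk)).const_smul _
  filter_upwards [(Filter.eventually_all_finset s).2 hterm] with x hx
  exact Finset.sum_congr rfl hx

theorem inner_toL2_eq_ite (hb : ∀ k ∈ s, MemLp (b k) 2 μ)
    (hON : ∀ j ∈ s, ∀ k ∈ s,
      ∫ x, (starRingEnd ℂ) (b j x) * b k x ∂μ = if j = k then 1 else 0) :
    ∀ j ∈ s, ∀ k ∈ s, inner ℂ (toL2 μ (b j)) (toL2 μ (b k)) = if j = k then 1 else 0 :=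
  fun j hj k hk => (inner_toL2 (hb j hj) (hb k hk)).trans (hON j hj k hk)

theorem eLpNorm_sub_fourierSum_le (hb : ∀ k ∈ s, MemLp (b k) 2 μ)
    (hON : ∀ j ∈ s, ∀ k ∈ s,
      ∫ x, (starRingEnd ℂ) (b j x) * b k x ∂μ = if j = k then 1 else 0)
    (hf : MemLp f 2 μ) {g : D → ℂ} (hg : g ∈ Submodule.span ℂ (b '' s)) :
    eLpNorm (f - fourierSum μ b f s) 2 μ ≤ eLpNorm (f - g) 2 μ := by
  obtain ⟨y, hy, hyg⟩ := exists_mem_span_coeFn_ae_eq (fun k hk => coeFn_toL2 (hb k hk)) hg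
  rw [eLpNorm_eq_enorm_of_ae_eq ((Lp.coeFn_sub _ _).trans
      ((coeFn_toL2 hf).sub (coeFn_sum_inner_toL2 hb hf))),
    eLpNorm_eq_enorm_of_ae_eq ((Lp.coeFn_sub _ _).trans ((coeFn_toL2 hf).sub hyg))]
  exact enorm_le_iff_norm_le.2
    (norm_sub_sum_inner_smul_le (inner_toL2_eq_ite hb hON) (toL2 μ f) hy)

theorem eLpNorm_fourierSum_sub_le (hb : ∀ k ∈ s, MemLp (b k) 2 μ)
    (hON : ∀ j ∈ s, ∀ k ∈ s,
      ∫ x, (starRingEnd ℂ) (b j x) * b k x ∂μ = if j = k then 1 else 0)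
    (hf : MemLp f 2 μ) (hts : t ⊆ s) :
    eLpNorm (fourierSum μ b f s - fourierSum μ b f t) 2 μ ≤
      eLpNorm (f - fourierSum μ b f t) 2 μ := by
  have hbt : ∀ k ∈ t, MemLp (b k) 2 μ := fun k hk => hb k (hts hk)
  rw [eLpNorm_eq_enorm_of_ae_eq ((Lp.coeFn_sub _ _).trans
      ((coeFn_sum_inner_toL2 hb hf).sub (coeFn_sum_inner_toL2 hbt hf))),
    eLpNorm_eq_enorm_of_ae_eq ((Lp.coeFn_sub _ _).trans
      ((coeFn_toL2 hf).sub (coeFn_sum_inner_toL2 hbt hf)))]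
  exact enorm_le_iff_norm_le.2
    (norm_sum_inner_smul_sub_le (inner_toL2_eq_ite hb hON) (toL2 μ f) hts)

end L2

theorem Vspan_mono {D : Type*} (b : ℕ → D → ℂ) : Monotone (Vspan b) := fun _ _ h =>
  Submodule.span_mono (Set.image_mono (Set.Icc_subset_Icc_right h))

theorem Vspan_eq_span_Ioc {D : Type*} (b : ℕ → D → ℂ) (n : ℕ) :
    Vspan b n = Submodule.span ℂ (b '' (Finset.Ioc 0 n : Finset ℕ)) := by
  rw [Vspan, Finset.coe_Ioc, ← Set.Icc_add_one_left_eq_Ioc]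
  rfl

section Christoffel

variable {D : Type*} [MeasurableSpace D] {μ : Measure D}

theorem div_le_christoffel {V : Submodule ℂ (D → ℂ)} {g : D → ℂ} (hg : g ∈ V) :
    eLpNorm g ⊤ μ / eLpNorm g 2 μ ≤ christoffel μ V :=
  le_iSup₂ (f := fun g (_ : g ∈ V) => eLpNorm g ⊤ μ / eLpNorm g 2 μ) g hg

theorem christoffel_mono {V W : Submodule ℂ (D → ℂ)} (h : V ≤ W) :
    christoffel μ V ≤ christoffel μ W :=
  iSup₂_le fun _ hg => div_le_christoffel (h hg)

theorem eLpNorm_top_le_christoffel_mul {V : Submodule ℂ (D → ℂ)} {g : D → ℂ} (hg : g ∈ V)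
    (hg2 : MemLp g 2 μ) : eLpNorm g ⊤ μ ≤ christoffel μ V * eLpNorm g 2 μ := by
  rcases eq_or_ne (eLpNorm g 2 μ) 0 with h0 | h0
  · rw [eLpNorm_eq_zero_iff hg2.1 two_ne_zero] at h0
    rw [eLpNorm_congr_ae h0, eLpNorm_zero]
    exact zero_le
  · exact (ENNReal.div_le_iff h0 hg2.eLpNorm_ne_top).1 (div_le_christoffel hg)

theorem eLpNorm_top_ne_zero {E : Type*} [NormedAddCommGroup E] {g : D → E} {p : ℝ≥0∞}
    (h : eLpNorm g p μ ≠ 0) : eLpNorm g ⊤ μ ≠ 0 := by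
  rw [eLpNorm_exponent_top, Ne, eLpNormEssSup_eq_zero_iff]
  exact fun h0 => h (by rw [eLpNorm_congr_ae h0, eLpNorm_zero])

theorem alphaSeq_antitone (F : Set (D → ℂ)) (b : ℕ → D → ℂ) : Antitone (alphaSeq μ F b) :=
  fun _ _ h => iSup₂_mono fun _ _ => le_iInf₂ fun g hg => iInf₂_le g (Vspan_mono b h hg)

end Christoffel

section Blocks

variable {D : Type*} [MeasurableSpace D] {μ : Measure D} {b : ℕ → D → ℂ} {F : Set (D → ℂ)}
  {f : D → ℂ}

theorem eLpNorm_sub_fourierSum_le_alphaSeq (hb : ∀ k, 1 ≤ k → MemLp (b k) 2 μ)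
    (hON : ∀ j k, 1 ≤ j → 1 ≤ k →
      ∫ x, (starRingEnd ℂ) (b j x) * b k x ∂μ = if j = k then 1 else 0)
    (hfF : f ∈ F) (hf : MemLp f 2 μ) (n : ℕ) :
    eLpNorm (f - fourierSum μ b f (Finset.Ioc 0 n)) 2 μ ≤ alphaSeq μ F b n :=
  calc eLpNorm (f - fourierSum μ b f (Finset.Ioc 0 n)) 2 μ
      ≤ ⨅ g ∈ Vspan b n, eLpNorm (fun x => f x - g x) 2 μ :=
        le_iInf₂ fun _ hg => eLpNorm_sub_fourierSum_le
          (fun k hk => hb k (Finset.mem_Ioc.1 hk).1)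
          (fun j hj k hk => hON j k (Finset.mem_Ioc.1 hj).1 (Finset.mem_Ioc.1 hk).1) hf
          (Vspan_eq_span_Ioc b n ▸ hg)
    _ ≤ alphaSeq μ F b n :=
        le_iSup₂ (f := fun h (_ : h ∈ F) => ⨅ g ∈ Vspan b n, eLpNorm (fun x => h x - g x) 2 μ)
          f hfF

theorem eLpNorm_top_fourierSum_Ioc_le (hb : ∀ k, 1 ≤ k → MemLp (b k) 2 μ)
    (hON : ∀ j k, 1 ≤ j → 1 ≤ k →
      ∫ x, (starRingEnd ℂ) (b j x) * b k x ∂μ = if j = k then 1 else 0)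
    (hfF : f ∈ F) (hf : MemLp f 2 μ) {a c n : ℕ} (hac : a ≤ c) (hcn : c ≤ n) :
    eLpNorm (fourierSum μ b f (Finset.Ioc a c)) ⊤ μ ≤
      christoffel μ (Vspan b n) * alphaSeq μ F b a := by
  have hbc : ∀ k ∈ Finset.Ioc 0 c, MemLp (b k) 2 μ := fun k hk => hb k (Finset.mem_Ioc.1 hk).1
  have hsub : Finset.Ioc a c ⊆ Finset.Ioc 0 c := Finset.Ioc_subset_Ioc_left (Nat.zero_le a)
  have hmem : fourierSum μ b f (Finset.Ioc a c) ∈ Vspan b n :=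
    Vspan_mono b hcn <| (Vspan_eq_span_Ioc b c).symm ▸
      Submodule.span_mono (Set.image_mono (Finset.coe_subset.2 hsub)) fourierSum_mem_span
  calc eLpNorm (fourierSum μ b f (Finset.Ioc a c)) ⊤ μ
      ≤ christoffel μ (Vspan b n) * eLpNorm (fourierSum μ b f (Finset.Ioc a c)) 2 μ :=
        eLpNorm_top_le_christoffel_mul hmem (memLp_fourierSum fun k hk => hbc k (hsub hk))
    _ ≤ christoffel μ (Vspan b n) * eLpNorm (f - fourierSum μ b f (Finset.Ioc 0 a)) 2 μ := by
        rw [← fourierSum_Ioc_sub_fourierSum_Ioc (Nat.zero_le a) hac]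
        gcongr
        exact eLpNorm_fourierSum_sub_le hbc
          (fun j hj k hk => hON j k (Finset.mem_Ioc.1 hj).1 (Finset.mem_Ioc.1 hk).1) hf
          (Finset.Ioc_subset_Ioc_right hac)
    _ ≤ christoffel μ (Vspan b n) * alphaSeq μ F b a := by
        gcongr
        exact eLpNorm_sub_fourierSum_le_alphaSeq hb hON hfF hf a

theorem tendsto_alphaSeq_atTop_zero (hb1 : AEStronglyMeasurable (b 1) μ)
    (hON1 : ∫ x, (starRingEnd ℂ) (b 1 x) * b 1 x ∂μ = 1) {n N : ℕ → ℕ} (hN : ∀ s, 1 ≤ N s)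
    (hw : ∑' s, christoffel μ (Vspan b (N s)) * alphaSeq μ F b (n s) ≠ ⊤) :
    Filter.Tendsto (alphaSeq μ F b) Filter.atTop (nhds 0) := by
  have hb12 := eLpNorm_two_eq_one hb1 hON1
  refine ENNReal.tendsto_atTop_zero_of_antitone_of_mul_le (n := n) (alphaSeq_antitone F b)
    (eLpNorm_top_ne_zero (hb12 ▸ one_ne_zero)) hw fun s => ?_
  rw [mul_comm]
  gcongr
  have hmem : b 1 ∈ Vspan b (N s) := Submodule.subset_span ⟨1, ⟨le_rfl, hN s⟩, rfl⟩
  simpa [hb12] using div_le_christoffel (μ := μ) hmem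

theorem tendstoInMeasure_fourierSum_Ioc (hb : ∀ k, 1 ≤ k → MemLp (b k) 2 μ)
    (hON : ∀ j k, 1 ≤ j → 1 ≤ k →
      ∫ x, (starRingEnd ℂ) (b j x) * b k x ∂μ = if j = k then 1 else 0)
    (hfF : f ∈ F) (hf : MemLp f 2 μ) (hα : Filter.Tendsto (alphaSeq μ F b) Filter.atTop (nhds 0))
    (m : ℕ) :
    TendstoInMeasure μ (fun n => fourierSum μ b f (Finset.Ioc m n)) Filter.atTop
      (f - fourierSum μ b f (Finset.Ioc 0 m)) := by
  have hmemLp : ∀ a c, MemLp (fourierSum μ b f (Finset.Ioc a c)) 2 μ := fun a c =>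
    memLp_fourierSum fun k hk => hb k (Nat.one_le_of_lt (Finset.mem_Ioc.1 hk).1)
  refine tendstoInMeasure_of_tendsto_eLpNorm two_ne_zero (fun n => (hmemLp m n).1)
    (hf.sub (hmemLp 0 m)).1 ?_
  refine tendsto_of_tendsto_of_tendsto_of_le_of_le' tendsto_const_nhds hα
    (.of_forall fun _ => zero_le) ((Filter.eventually_ge_atTop m).mono fun n hn => ?_)
  rw [sub_sub_eq_add_sub, add_comm, fourierSum_Ioc_add_fourierSum_Ioc (Nat.zero_le m) hn,
    eLpNorm_sub_comm]
  exact eLpNorm_sub_fourierSum_le_alphaSeq hb hON hfF hf n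

theorem exists_tendstoUniformlyOn_fourierSum_Ioc (hb : ∀ k, 1 ≤ k → MemLp (b k) 2 μ)
    (hON : ∀ j k, 1 ≤ j → 1 ≤ k →
      ∫ x, (starRingEnd ℂ) (b j x) * b k x ∂μ = if j = k then 1 else 0)
    (hfF : f ∈ F) (hf : MemLp f 2 μ) {m : ℕ} (hm : 1 ≤ m)
    (hw : ∑' s, christoffel μ (Vspan b (2 ^ (s + 1) * m)) * alphaSeq μ F b (2 ^ s * m) ≠ ⊤) :
    ∃ g : D → ℂ, ∃ S : Set D, (∀ᵐ x ∂μ, x ∈ S) ∧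
      TendstoUniformlyOn (fun n => fourierSum μ b f (Finset.Ioc m n)) g Filter.atTop S ∧
      ∀ x ∈ S, ‖g x‖ₑ ≤
        ∑' s, christoffel μ (Vspan b (2 ^ (s + 1) * m)) * alphaSeq μ F b (2 ^ s * m) := by
  set S : Set D := {x | ∀ p : ℕ × ℕ, ‖fourierSum μ b f (Finset.Ioc p.1 p.2) x‖ₑ ≤
    eLpNorm (fourierSum μ b f (Finset.Ioc p.1 p.2)) ⊤ μ}
  obtain ⟨g, hgT, hgw⟩ := exists_tendstoUniformlyOn_of_edist_le_on_blocks
    (u := fun n => fourierSum μ b f (Finset.Ioc m n)) (S := S) (n := fun s => 2 ^ s * m)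
    (fun _ _ hst => Nat.mul_le_mul_right m (Nat.pow_le_pow_right two_pos hst))
    (Filter.tendsto_atTop_mono (fun s => Nat.lt_two_pow_self.le.trans
      (Nat.le_mul_of_pos_right _ hm)) Filter.tendsto_id) hw
    fun s k hk hk' x hx => by
      rw [edist_eq_enorm_sub, ← Pi.sub_apply,
        fourierSum_Ioc_sub_fourierSum_Ioc (Nat.le_mul_of_pos_left m (by positivity)) hk]
      exact (hx (2 ^ s * m, k)).trans (eLpNorm_top_fourierSum_Ioc_le hb hON hfF hf hk hk')
  refine ⟨g, S, ae_all_iff.2 fun _ => ae_le_eLpNormEssSup, hgT, fun x hx => ?_⟩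
  simpa [fourierSum] using hgw x hx

end Blocks

theorem stmt6_general {D : Type*} [MeasurableSpace D] (μ : Measure D)
    (bb : ℕ → D → ℂ)
    (hmeas : ∀ k, Measurable (bb k))
    (hON : ∀ j k, 1 ≤ j → 1 ≤ k →
      ∫ x, (starRingEnd ℂ) (bb j x) * bb k x ∂μ = if j = k then 1 else 0)
    (F : Set (D → ℂ))
    (hFL2 : ∀ f ∈ F, MemLp f 2 μ)
    (m : ℕ) (hm : 1 ≤ m)
    (hfin : (∑' j : ℕ, if m / 4 < j then
        alphaSeq μ F bb j * christoffel μ (Vspan bb (4 * j)) / (j : ℝ≥0∞) else 0) ≠ ⊤)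
    (f : D → ℂ) (hf : f ∈ F) :
    ∃ (g : D → ℂ) (N : Set D), μ N = 0 ∧
      TendstoUniformlyOn
        (fun (n : ℕ) (x : D) => ∑ k ∈ Finset.Icc (m + 1) n, fourCoeff μ bb f k * bb k x)
        g Filter.atTop Nᶜ ∧
      (∀ᵐ x ∂μ,
        f x = (∑ k ∈ Finset.Icc 1 m, fourCoeff μ bb f k * bb k x) + g x) ∧
      eLpNorm (fun x => f x - ∑ k ∈ Finset.Icc 1 m, fourCoeff μ bb f k * bb k x) ⊤ μ ≤
        2 * ∑' j : ℕ, (if m / 4 < j then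
          alphaSeq μ F bb j * christoffel μ (Vspan bb (4 * j)) / (j : ℝ≥0∞) else 0) := by
  simp only [Finset.Icc_add_one_left_eq_Ioc,
    show Finset.Icc 1 m = Finset.Ioc 0 m from Finset.Icc_add_one_left_eq_Ioc 0 m]
  have hb : ∀ k, 1 ≤ k → MemLp (bb k) 2 μ := fun k hk =>
    memLp_two_of_integral_conj_mul_self_ne_zero (hmeas k).aestronglyMeasurable
      (by simp [hON k k hk hk])
  have hf2 := hFL2 f hf
  set w : ℕ → ℝ≥0∞ := fun s =>
    christoffel μ (Vspan bb (2 ^ (s + 1) * m)) * alphaSeq μ F bb (2 ^ s * m)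
  have hw : ∑' s, w s ≤ 2 * ∑' j : ℕ, (if m / 4 < j then
      alphaSeq μ F bb j * christoffel μ (Vspan bb (4 * j)) / (j : ℝ≥0∞) else 0) :=
    tsum_dyadic_le_two_mul_tsum (alphaSeq_antitone F bb)
      (fun _ _ h => christoffel_mono (Vspan_mono bb h)) (by omega)
  have hwtop : ∑' s, w s ≠ ⊤ := ne_top_of_le_ne_top (mul_ne_top ofNat_ne_top hfin) hw
  obtain ⟨g, S, hS, hgT, hgw⟩ := exists_tendstoUniformlyOn_fourierSum_Ioc hb hON hf hf2 hm hwtop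
  have hα := tendsto_alphaSeq_atTop_zero (hmeas 1).aestronglyMeasurable
    (by simpa using hON 1 1 le_rfl le_rfl) (N := fun s => 2 ^ (s + 1) * m)
    (fun _ => Nat.one_le_iff_ne_zero.2 (by positivity)) hwtop
  have hae : f - fourierSum μ bb f (Finset.Ioc 0 m) =ᵐ[μ] g :=
    tendstoInMeasure_ae_unique (tendstoInMeasure_fourierSum_Ioc hb hON hf hf2 hα m)
      (hgT.tendstoInMeasure hS)
  refine ⟨g, Sᶜ, hS, by rwa [compl_compl], hae.mono fun x hx => eq_add_of_sub_eq' hx, ?_⟩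
  calc eLpNorm (f - fourierSum μ bb f (Finset.Ioc 0 m)) ⊤ μ = eLpNorm g ⊤ μ :=
        eLpNorm_congr_ae hae
    _ ≤ ∑' s, w s :=
        eLpNorm_exponent_top (f := g) ▸ eLpNormEssSup_le_of_ae_enorm_bound (hS.mono hgw)
    _ ≤ _ := hw

/-- **Lemma (uniform convergence of the tail of the projection series).**
In the general setting, if `∑_{j>⌊m/4⌋} α_j Λ_{4j}/j < ∞`, then for every `f ∈ F` the
series `∑_{k>m} ⟨f, b_k⟩ b_k` converges uniformly off a `μ`-null set to some `g`, one has
`f = P_{V_m} f + g` `μ`-a.e., and `‖f - P_{V_m} f‖_{L_∞(μ)} ≤ 2 ∑_{j>⌊m/4⌋} α_j Λ_{4j}/j`. -/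
theorem stmt6 {D : Type*} [MeasurableSpace D] (μ : Measure D)
    (bb : ℕ → D → ℂ)
    (hmeas : ∀ k, Measurable (bb k))
    (hbdd : ∀ k, ∃ M : ℝ, ∀ x, ‖bb k x‖ ≤ M)
    (hON : ∀ j k, 1 ≤ j → 1 ≤ k →
      ∫ x, (starRingEnd ℂ) (bb j x) * bb k x ∂μ = if j = k then 1 else 0)
    (F : Set (D → ℂ))
    (hFbdd : ∀ f ∈ F, ∃ M : ℝ, ∀ x, ‖f x‖ ≤ M)
    (hFmeas : ∀ f ∈ F, Measurable f)
    (hFL2 : ∀ f ∈ F, MemLp f 2 μ)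
    (m : ℕ) (hm : 1 ≤ m)
    (hfin : (∑' j : ℕ, if m / 4 < j then
        alphaSeq μ F bb j * christoffel μ (Vspan bb (4 * j)) / (j : ℝ≥0∞) else 0) ≠ ⊤)
    (f : D → ℂ) (hf : f ∈ F) :
    ∃ (g : D → ℂ) (N : Set D), μ N = 0 ∧
      TendstoUniformlyOn
        (fun (n : ℕ) (x : D) => ∑ k ∈ Finset.Icc (m + 1) n, fourCoeff μ bb f k * bb k x)
        g Filter.atTop Nᶜ ∧
      (∀ᵐ x ∂μ,
        f x = (∑ k ∈ Finset.Icc 1 m, fourCoeff μ bb f k * bb k x) + g x) ∧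
      eLpNorm (fun x => f x - ∑ k ∈ Finset.Icc 1 m, fourCoeff μ bb f k * bb k x) ⊤ μ ≤
        2 * ∑' j : ℕ, (if m / 4 < j then
          alphaSeq μ F bb j * christoffel μ (Vspan bb (4 * j)) / (j : ℝ≥0∞) else 0) :=
  stmt6_general μ bb hmeas hON F hFL2 m hm hfin f hf
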